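/- Let (p,q,m) = (3,1,3), so w(y) = √2 · sech(y), and let λ ∈ ℝ with λ ≠ 3 and χ ∈ ℝ with χ ≠ 0. Suppose ψ : ℝ → ℝ is twice continuously differentiable, ψ and ψ' are bounded and tend to 0 as |y| → ∞, and ψ satisfies (L₀ − λ)ψ = w³. Suppose further that for some c ≠ 0 the function φ = c·ψ satisfies the scalar NLEP: φ'' − φ + 3 w² φ − 3·χ·w³·(∫_ℝ w²φ dy)/(∫_ℝ w³ dy) = λφ. Then λ satisfies the explicit algebraic equation 1/χ = (9/2)/(3 − λ). -/

import Mathlib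

/-
With `K = ∫ w² ψ`, `J = ∫ w³` and `P = ∫ w⁵`: since `φ = c ψ`, subtracting `c` times the
equation for `ψ` from the NLEP at a single point leaves `J = 3 χ K`. Since `L₀ (w²) = 3 w²`,
integrating `w² (L₀ - λ) ψ = w⁵` by parts gives `P = (3 - λ) K`, and `w³ tanh` is an
antiderivative of `2 w⁵ - 3 w³`, so `2 P = 3 J`. Hence `2 (3 - λ) K = 9 χ K`, where `K ≠ 0`
because `J > 0`.
-/

open MeasureTheory Real Filter

/-- The homoclinic solution of the core problem for `p = 3`: `w(y) = √2 sech(y)`. -/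
noncomputable def w3 (y : ℝ) : ℝ := Real.sqrt 2 / Real.cosh y

open Topology

lemma w3_pos (y : ℝ) : 0 < w3 y :=
  div_pos (sqrt_pos.2 two_pos) (cosh_pos y)

lemma w3_le_sqrt_two (y : ℝ) : w3 y ≤ √2 := by
  rw [w3, div_le_iff₀ (cosh_pos y)]
  nlinarith [one_le_cosh y, sqrt_nonneg 2]

lemma w3_sq (y : ℝ) : w3 y ^ 2 = 2 / cosh y ^ 2 := by
  rw [w3, div_pow, sq_sqrt zero_le_two]

lemma tanh_sq_eq_one_sub_w3_sq (y : ℝ) : tanh y ^ 2 = 1 - w3 y ^ 2 / 2 := by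
  have := cosh_sq y
  rw [tanh_eq_sinh_div_cosh, w3_sq]
  field_simp
  linarith

lemma hasDerivAt_w3 (y : ℝ) : HasDerivAt w3 (-(w3 y * tanh y)) y := by
  refine ((hasDerivAt_const y √2).div (hasDerivAt_cosh y) (cosh_pos y).ne').congr_deriv ?_
  simp only [w3, tanh_eq_sinh_div_cosh]
  field_simp
  ring

lemma hasDerivAt_tanh (y : ℝ) : HasDerivAt tanh (w3 y ^ 2 / 2) y := by
  have := cosh_sq y
  rw [show tanh = fun x => sinh x / cosh x from funext tanh_eq_sinh_div_cosh]
  refine ((hasDerivAt_sinh y).div (hasDerivAt_cosh y) (cosh_pos y).ne').congr_deriv ?_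
  rw [w3_sq]
  field_simp
  linarith

lemma continuous_w3 : Continuous w3 :=
  continuous_const.div continuous_cosh fun y => (cosh_pos y).ne'

lemma tendsto_w3_atTop : Tendsto w3 atTop (𝓝 0) := by
  refine tendsto_const_nhds.div_atTop (tendsto_atTop_mono (fun y => ?_)
    (tendsto_exp_atTop.atTop_div_const two_pos))
  rw [cosh_eq]
  linarith [exp_pos (-y)]

lemma tendsto_w3_atBot : Tendsto w3 atBot (𝓝 0) := by
  have hw3_neg : (w3 ∘ Neg.neg) = w3 := funext fun y => by simp [w3]
  simpa [hw3_neg] using tendsto_w3_atTop.comp tendsto_neg_atBot_atTop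

lemma integrable_of_hasDerivAt_of_nonneg {g g' : ℝ → ℝ} {M : ℝ}
    (hderiv : ∀ x, HasDerivAt g (g' x) x) (hg' : ∀ x, 0 ≤ g' x) (hg : ∀ x, |g x| ≤ M) :
    Integrable g' := by
  have hint : ∀ a b, IntervalIntegrable g' volume a b := fun a b =>
    intervalIntegral.intervalIntegrable_deriv_of_nonneg
      (HasDerivAt.continuousOn fun x _ => hderiv x) (fun x _ => hderiv x) (fun x _ => hg' x)
  refine integrable_of_intervalIntegral_norm_bounded (l := atTop (α := ℕ)) (2 * M)
    (fun i => (hint (-i) i).1) (tendsto_neg_atBot_iff.mpr tendsto_natCast_atTop_atTop)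
    tendsto_natCast_atTop_atTop (Eventually.of_forall fun i => ?_)
  simp_rw [Real.norm_of_nonneg (hg' _)]
  rw [intervalIntegral.integral_eq_sub_of_hasDerivAt (fun x _ => hderiv x) (hint _ _)]
  linarith [(abs_le.mp (hg i)).2, (abs_le.mp (hg (-i))).1]

lemma integrable_w3_sq : Integrable fun y => w3 y ^ 2 := by
  refine integrable_of_hasDerivAt_of_nonneg (g := fun y => 2 * tanh y) (M := 2)
    (fun y => ?_) (fun y => sq_nonneg _) (fun y => ?_)
  · exact ((hasDerivAt_tanh y).const_mul 2).congr_deriv (by ring)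
  · rw [abs_mul, abs_two]
    linarith [(abs_tanh_lt_one y).le]

lemma integrable_mul_w3_sq {g : ℝ → ℝ} {C : ℝ} (hg : Continuous g)
    (hC : ∀ y, |g y| ≤ C) : Integrable fun y => g y * w3 y ^ 2 :=
  integrable_w3_sq.bdd_mul hg.aestronglyMeasurable (ae_of_all _ hC)

lemma integrable_w3_pow {n : ℕ} (hn : 2 ≤ n) : Integrable fun y => w3 y ^ n := by
  obtain ⟨k, rfl⟩ := Nat.exists_eq_add_of_le' hn
  simp_rw [pow_add]
  refine integrable_mul_w3_sq (C := √2 ^ k) (continuous_w3.pow k) fun y => ?_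
  rw [abs_of_pos (pow_pos (w3_pos y) k)]
  exact pow_le_pow_left₀ (w3_pos y).le (w3_le_sqrt_two y) k

lemma integral_eq_zero_of_hasDerivAt_of_abs_le_mul_w3_sq {G G' : ℝ → ℝ} {C : ℝ}
    (hderiv : ∀ y, HasDerivAt G (G' y) y) (hG' : Integrable G')
    (hG : ∀ y, |G y| ≤ C * w3 y ^ 2) : ∫ y, G' y = 0 := by
  have hlim : ∀ l, Tendsto w3 l (𝓝 0) → Tendsto G l (𝓝 0) := fun l hl =>
    squeeze_zero_norm hG (by simpa using (hl.pow 2).const_mul C)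
  simpa using integral_of_hasDerivAt_of_tendsto hderiv hG'
    (hlim _ tendsto_w3_atBot) (hlim _ tendsto_w3_atTop)

lemma two_mul_integral_w3_pow_five : 2 * ∫ y, w3 y ^ 5 = 3 * ∫ y, w3 y ^ 3 := by
  have hderiv : ∀ y, HasDerivAt (fun y => w3 y ^ 3 * tanh y) (2 * w3 y ^ 5 - 3 * w3 y ^ 3) y :=
    fun y => (((hasDerivAt_w3 y).pow 3).mul (hasDerivAt_tanh y)).congr_deriv
      (by simp only [Pi.pow_apply]
          linear_combination (-3 * w3 y ^ 3) * tanh_sq_eq_one_sub_w3_sq y)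
  have hbound : ∀ y, |w3 y ^ 3 * tanh y| ≤ √2 * w3 y ^ 2 := fun y => by
    calc |w3 y ^ 3 * tanh y| = w3 y ^ 2 * (w3 y * |tanh y|) := by
          rw [abs_mul, abs_of_pos (pow_pos (w3_pos y) 3)]
          ring
      _ ≤ w3 y ^ 2 * (√2 * 1) := by
          gcongr
          exacts [w3_le_sqrt_two y, (abs_tanh_lt_one y).le]
      _ = √2 * w3 y ^ 2 := by ring
  have h5 := (integrable_w3_pow (n := 5) (by norm_num)).const_mul 2
  have h3 := (integrable_w3_pow (n := 3) (by norm_num)).const_mul 3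
  have h := integral_eq_zero_of_hasDerivAt_of_abs_le_mul_w3_sq hderiv (h5.sub h3) hbound
  rw [integral_sub h5 h3, integral_const_mul, integral_const_mul] at h
  linarith

lemma integral_w3_sq_mul_eq_of_eq {lam C : ℝ} {ψ f : ℝ → ℝ} (hψ : ContDiff ℝ 2 ψ)
    (hψC : ∀ y, |ψ y| ≤ C) (hψ'C : ∀ y, |deriv ψ y| ≤ C)
    (hf : Integrable fun y => w3 y ^ 2 * f y)
    (heq : ∀ y, deriv (deriv ψ) y - ψ y + 3 * w3 y ^ 2 * ψ y - lam * ψ y = f y) :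
    ∫ y, w3 y ^ 2 * f y = (3 - lam) * ∫ y, w3 y ^ 2 * ψ y := by
  have hd : Differentiable ℝ ψ := hψ.differentiable (by norm_num)
  have hd' : Differentiable ℝ (deriv ψ) :=
    ((contDiff_succ_iff_deriv (n := 1)).mp hψ).2.2.differentiable one_ne_zero
  have hK : Integrable fun y => w3 y ^ 2 * ψ y := by
    simpa only [mul_comm] using integrable_mul_w3_sq hψ.continuous hψC
  -- the Wronskian `w3² ψ' - (w3²)' ψ`; its derivative simplifies because `L₀ (w3²) = 3 w3²`
  set G := fun y => w3 y ^ 2 * deriv ψ y + 2 * w3 y ^ 2 * tanh y * ψ y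
  have hderiv : ∀ y, HasDerivAt G (w3 y ^ 2 * f y - (3 - lam) * (w3 y ^ 2 * ψ y)) y := by
    intro y
    refine ((((hasDerivAt_w3 y).pow 2).mul (hd' y).hasDerivAt).add
      (((((hasDerivAt_w3 y).pow 2).const_mul 2).mul (hasDerivAt_tanh y)).mul
        (hd y).hasDerivAt)).congr_deriv ?_
    simp only [Pi.pow_apply, Pi.mul_apply]
    linear_combination w3 y ^ 2 * heq y - 4 * w3 y ^ 2 * ψ y * tanh_sq_eq_one_sub_w3_sq y
  have hbound : ∀ y, |G y| ≤ 3 * C * w3 y ^ 2 := fun y => by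
    have hw := sq_nonneg (w3 y)
    have htanh := (abs_tanh_lt_one y).le
    calc |G y| ≤ |w3 y ^ 2 * deriv ψ y| + |2 * w3 y ^ 2 * tanh y * ψ y| := abs_add_le _ _
      _ = w3 y ^ 2 * |deriv ψ y| + 2 * w3 y ^ 2 * (|tanh y| * |ψ y|) := by
          simp only [abs_mul, abs_of_nonneg hw, abs_two]
          ring
      _ ≤ w3 y ^ 2 * C + 2 * w3 y ^ 2 * (1 * C) := by
          gcongr
          exacts [hψ'C y, hψC y]
      _ = 3 * C * w3 y ^ 2 := by ring
  have h := integral_eq_zero_of_hasDerivAt_of_abs_le_mul_w3_sq hderiv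
    (hf.sub (hK.const_mul _)) hbound
  rw [integral_sub hf (hK.const_mul _), integral_const_mul] at h
  linarith

lemma integral_w3_pow_pos {n : ℕ} (hn : 2 ≤ n) : 0 < ∫ y, w3 y ^ n :=
  integral_pos_of_integrable_nonneg_nonzero (x := 0) (continuous_w3.pow n)
    (integrable_w3_pow hn) (fun y => (pow_pos (w3_pos y) n).le) (pow_pos (w3_pos 0) n).ne'

theorem NLEP_explicitly_solvable (lam : ℝ) (χ : ℝ)
    (ψ : ℝ → ℝ) (hψ : ContDiff ℝ 2 ψ)
    (hψ_bdd : ∃ C : ℝ, ∀ y : ℝ, |ψ y| ≤ C ∧ |deriv ψ y| ≤ C)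
    (hψ_eq : ∀ y : ℝ,
      deriv (deriv ψ) y - ψ y + 3 * (w3 y) ^ 2 * ψ y - lam * ψ y = (w3 y) ^ 3)
    (c : ℝ) (hc : c ≠ 0) (φ : ℝ → ℝ) (hφ : φ = fun y => c * ψ y)
    (hNLEP : ∀ y : ℝ,
      deriv (deriv φ) y - φ y + 3 * (w3 y) ^ 2 * φ y -
        3 * χ * (w3 y) ^ 3 * (∫ t : ℝ, (w3 t) ^ 2 * φ t) / (∫ t : ℝ, (w3 t) ^ 3)
        = lam * φ y) :
    1 / χ = (9 / 2) / (3 - lam) := by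
  obtain ⟨C, hC⟩ := hψ_bdd
  subst hφ
  set K := ∫ y, w3 y ^ 2 * ψ y
  set J := ∫ y, w3 y ^ 3
  have hJ : 0 < J := integral_w3_pow_pos (by norm_num)
  have hJK : J = 3 * χ * K := by
    have h := hNLEP 0
    simp only [deriv_const_mul_field', mul_left_comm _ c, integral_const_mul] at h
    have h' : c * w3 0 ^ 3 * (3 * χ * K / J) = c * w3 0 ^ 3 := by
      linear_combination c * hψ_eq 0 - h
    rw [mul_eq_left₀ (mul_ne_zero hc (pow_pos (w3_pos 0) 3).ne'), div_eq_one_iff_eq hJ.ne'] at h'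
    exact h'.symm
  have hPK : ∫ y, w3 y ^ 5 = (3 - lam) * K := by
    simpa only [← pow_add] using integral_w3_sq_mul_eq_of_eq hψ (fun y => (hC y).1)
      (fun y => (hC y).2) (by simpa only [← pow_add] using integrable_w3_pow (by norm_num)) hψ_eq
  have hK : K ≠ 0 := by
    rintro hK
    rw [hK, mul_zero] at hJK
    exact hJ.ne' hJK
  have hlam : 3 - lam = 9 / 2 * χ := by
    apply mul_right_cancel₀ hK
    linear_combination -hPK + two_mul_integral_w3_pow_five / 2 + 3 / 2 * hJK
  rw [hlam, div_mul_cancel_left₀ (by norm_num), one_div]
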